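/- For every r ∈ ℂ with r ∉ ℤ, the osp(1|2)-representation U_0^{osp}(r) is irreducible: the only subspaces of U_0^{osp}(r) invariant under all five operators E, H, F, X, Y are the zero subspace and U_0^{osp}(r) itself. -/

import Mathlib

/-!
The `osp(1|2)`-module `U_0^{osp}(r)`: underlying space `(ℤ ⊕ ℤ) →₀ ℂ`, where
`Sum.inl i` encodes the basis vector `E_i` and `Sum.inr i` encodes the basis
vector `E_{i−1/2}`.
-/

/-- `E·E_i = E_{i−1}`, `E·E_{i−1/2} = E_{i−3/2}`. -/
noncomputable def Eosp : Module.End ℂ ((ℤ ⊕ ℤ) →₀ ℂ) :=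
  Finsupp.lift ((ℤ ⊕ ℤ) →₀ ℂ) ℂ (ℤ ⊕ ℤ)
    (Sum.elim (fun i => Finsupp.single (Sum.inl (i - 1)) 1)
              (fun i => Finsupp.single (Sum.inr (i - 1)) 1))

/-- `H·E_i = −(2i+2r+1)·E_i`, `H·E_{i−1/2} = −(2i+2r)·E_{i−1/2}`. -/
noncomputable def Hosp (r : ℂ) : Module.End ℂ ((ℤ ⊕ ℤ) →₀ ℂ) :=
  Finsupp.lift ((ℤ ⊕ ℤ) →₀ ℂ) ℂ (ℤ ⊕ ℤ)
    (Sum.elim (fun i => (-(2 * (i : ℂ) + 2 * r + 1)) • Finsupp.single (Sum.inl i) 1)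
              (fun i => (-(2 * (i : ℂ) + 2 * r)) • Finsupp.single (Sum.inr i) 1))

/-- `F·E_i = −(r+i+1)²·E_{i+1}`, `F·E_{i−1/2} = −(r+i+1)(r+i)·E_{i+1/2}`. -/
noncomputable def Fosp (r : ℂ) : Module.End ℂ ((ℤ ⊕ ℤ) →₀ ℂ) :=
  Finsupp.lift ((ℤ ⊕ ℤ) →₀ ℂ) ℂ (ℤ ⊕ ℤ)
    (Sum.elim
      (fun i => (-((r + (i : ℂ) + 1) ^ 2)) • Finsupp.single (Sum.inl (i + 1)) 1)
      (fun i => (-((r + (i : ℂ) + 1) * (r + (i : ℂ)))) • Finsupp.single (Sum.inr (i + 1)) 1))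

/-- `X·E_i = E_{i−1/2}`, `X·E_{i−1/2} = E_{i−1}`. -/
noncomputable def Xosp : Module.End ℂ ((ℤ ⊕ ℤ) →₀ ℂ) :=
  Finsupp.lift ((ℤ ⊕ ℤ) →₀ ℂ) ℂ (ℤ ⊕ ℤ)
    (Sum.elim (fun i => Finsupp.single (Sum.inr i) 1)
              (fun i => Finsupp.single (Sum.inl (i - 1)) 1))

/-- `Y·E_i = −(r+i+1)·E_{i+1/2}`, `Y·E_{i−1/2} = −(r+i)·E_i`. -/
noncomputable def Yosp (r : ℂ) : Module.End ℂ ((ℤ ⊕ ℤ) →₀ ℂ) :=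
  Finsupp.lift ((ℤ ⊕ ℤ) →₀ ℂ) ℂ (ℤ ⊕ ℤ)
    (Sum.elim (fun i => (-(r + (i : ℂ) + 1)) • Finsupp.single (Sum.inr (i + 1)) 1)
              (fun i => (-(r + (i : ℂ))) • Finsupp.single (Sum.inl i) 1))




/-!
`H` acts diagonally on the basis with pairwise distinct weights, so an `H`-invariant subspace
contains every basis vector occurring in one of its elements: a polynomial in `H` vanishing on
all other weights of the support isolates it. Since `r ∉ ℤ`, all coefficients of `X` and `Y` on
basis vectors are nonzero, and `X` moves `E_i ↦ E_{i-1/2} ↦ E_{i-1}` while `Y` moves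
`E_i ↦ E_{i+1/2} ↦ E_{i+1}` up to these scalars; so one basis vector generates all of them.
-/

open Finsupp Polynomial

theorem Finsupp.single_apply_mem_of_diagonal_invariant {K α : Type*} [Field K]
    {f : Module.End K (α →₀ K)} {w : α → K} (hw : Function.Injective w)
    (hf : ∀ a, f (single a 1) = w a • single a 1)
    {p : Submodule K (α →₀ K)} (hp : ∀ v ∈ p, f v ∈ p) {v : α →₀ K} (hv : v ∈ p) (a : α) :
    single a (v a) ∈ p := by
  classical
  set q : K[X] := ∏ b ∈ v.support.erase a, (X - C (w b))
  have aeval_single (b : α) (c : K) : aeval f q (single b c) = q.eval (w b) • single b c := by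
    refine Module.End.aeval_apply_of_mem_apply_eq_smul ?_
    rw [← smul_single_one, map_smul, hf, smul_comm]
  have hq_ne : q.eval (w a) ≠ 0 := by
    simp only [q, eval_prod, eval_sub, eval_X, eval_C, Finset.prod_ne_zero_iff, sub_ne_zero]
    exact fun b hb => hw.ne (Finset.ne_of_mem_erase hb).symm
  have hq_isolates : aeval f q v = q.eval (w a) • single a (v a) := by
    conv_lhs => rw [← v.sum_single]
    rw [map_finsuppSum, Finsupp.sum, Finset.sum_eq_single a]
    · exact aeval_single a (v a)
    · intro b hb hba
      rw [aeval_single, Polynomial.eval_prod, Finset.prod_eq_zero (Finset.mem_erase.2 ⟨hba, hb⟩)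
        (by simp), zero_smul]
    · intro ha
      rw [Finsupp.notMem_support_iff.1 ha, single_zero, map_zero]
  rw [← p.smul_mem_iff hq_ne, ← hq_isolates]
  exact aeval_apply_smul_mem_of_le_comap hv q f hp

/-- Writing the weights of `H` as `-(2r + n)`, the basis vector `E_i` has `n = 2i + 1` and
`E_{i-1/2}` has `n = 2i`. -/
def ospIndex : ℤ ⊕ ℤ → ℤ :=
  Sum.elim (fun i => 2 * i + 1) (fun i => 2 * i)

theorem ospIndex_injective : Function.Injective ospIndex := by
  refine Function.Injective.sumElim (fun i j h => ?_) (fun i j h => ?_) (fun i j h => ?_) <;>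
    omega

theorem Hosp_single_one (r : ℂ) (k : ℤ ⊕ ℤ) :
    Hosp r (single k 1) = (-(2 * r + ospIndex k)) • single k 1 := by
  rcases k with i | i <;>
  · simp only [Hosp, lift_apply, sum_single_index, ospIndex, Sum.elim_inl, Sum.elim_inr, one_smul,
      zero_smul]
    congr 1
    push_cast
    ring

theorem Hosp_weight_injective (r : ℂ) :
    Function.Injective fun k => -(2 * r + ospIndex k) := fun _ _ h =>
  ospIndex_injective (by exact_mod_cast add_left_cancel (neg_inj.1 h))

theorem Xosp_single_inl (i : ℤ) : Xosp (single (Sum.inl i) 1) = single (Sum.inr i) 1 := by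
  simp [Xosp]

theorem Xosp_single_inr (i : ℤ) : Xosp (single (Sum.inr i) 1) = single (Sum.inl (i - 1)) 1 := by
  simp [Xosp]

theorem Yosp_single_inl (r : ℂ) (i : ℤ) :
    Yosp r (single (Sum.inl i) 1) = (-(r + (i + 1 : ℤ))) • single (Sum.inr (i + 1)) 1 := by
  simp [Yosp, add_assoc]

theorem Yosp_single_inr (r : ℂ) (i : ℤ) :
    Yosp r (single (Sum.inr i) 1) = (-(r + i)) • single (Sum.inl i) 1 := by
  simp [Yosp]

section Ladder

variable {r : ℂ} {p : Submodule ℂ ((ℤ ⊕ ℤ) →₀ ℂ)}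

theorem neg_add_intCast_ne_zero (hr : ∀ n : ℤ, r ≠ (n : ℂ)) (i : ℤ) : -(r + i) ≠ 0 := by
  rw [neg_ne_zero, ← sub_neg_eq_add, sub_ne_zero, ← Int.cast_neg]
  exact hr (-i)

theorem single_inr_mem_iff (hr : ∀ n : ℤ, r ≠ (n : ℂ)) (hX : ∀ v ∈ p, Xosp v ∈ p)
    (hY : ∀ v ∈ p, Yosp r v ∈ p) (i : ℤ) :
    single (Sum.inr i) 1 ∈ p ↔ single (Sum.inl i) 1 ∈ p := by
  refine ⟨fun h => ?_, fun h => Xosp_single_inl i ▸ hX _ h⟩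
  rw [← p.smul_mem_iff (neg_add_intCast_ne_zero hr i), ← Yosp_single_inr]
  exact hY _ h

theorem single_inl_add_one_mem_iff (hr : ∀ n : ℤ, r ≠ (n : ℂ)) (hX : ∀ v ∈ p, Xosp v ∈ p)
    (hY : ∀ v ∈ p, Yosp r v ∈ p) (i : ℤ) :
    single (Sum.inl (i + 1)) 1 ∈ p ↔ single (Sum.inl i) 1 ∈ p := by
  rw [← single_inr_mem_iff hr hX hY]
  constructor
  · intro h
    simpa [Xosp_single_inr] using hX _ h
  · intro h
    rw [← p.smul_mem_iff (neg_add_intCast_ne_zero hr (i + 1)), ← Yosp_single_inl]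
    exact hY _ h

end Ladder

/-- For `r ∉ ℤ`, the `osp(1|2)`-representation `U_0^{osp}(r)` is irreducible: its only
subspaces invariant under all of `E, H, F, X, Y` are `⊥` and `⊤`. -/
theorem U0osp_irreducible (r : ℂ) (hr : ∀ n : ℤ, r ≠ (n : ℂ)) :
    ∀ p : Submodule ℂ ((ℤ ⊕ ℤ) →₀ ℂ),
      (∀ v ∈ p, Eosp v ∈ p) →
      (∀ v ∈ p, Hosp r v ∈ p) →
      (∀ v ∈ p, Fosp r v ∈ p) →
      (∀ v ∈ p, Xosp v ∈ p) →
      (∀ v ∈ p, Yosp r v ∈ p) →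
      p = ⊥ ∨ p = ⊤ := by
  intro p _ hH _ hX hY
  refine or_iff_not_imp_left.2 fun hp => ?_
  obtain ⟨v, hv, hv0⟩ := p.ne_bot_iff.1 hp
  obtain ⟨k, hk⟩ := Finsupp.ne_iff.1 hv0
  have hk_mem : single k 1 ∈ p := by
    rw [← p.smul_mem_iff hk, smul_single_one]
    exact single_apply_mem_of_diagonal_invariant (Hosp_weight_injective r) (Hosp_single_one r) hH
      hv k
  obtain ⟨i₀, hi₀⟩ : ∃ i, single (Sum.inl i) 1 ∈ p := by
    rcases k with i | i
    · exact ⟨i, hk_mem⟩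
    · exact ⟨i, (single_inr_mem_iff hr hX hY i).1 hk_mem⟩
  have hinl (i : ℤ) : single (Sum.inl i) 1 ∈ p :=
    Int.inductionOn' i i₀ hi₀ (fun j _ hj => (single_inl_add_one_mem_iff hr hX hY j).2 hj)
      fun j _ hj => (single_inl_add_one_mem_iff hr hX hY (j - 1)).1 (by rwa [sub_add_cancel])
  rw [eq_top_iff, ← Finsupp.basisSingleOne.span_eq, Submodule.span_le]
  rintro _ ⟨i | i, rfl⟩
  · exact hinl i
  · exact (single_inr_mem_iff hr hX hY i).2 (hinl i)
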